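/- arXiv:2204.13619 — 2 statements merged into one kernel-verified Lean document; each statement's English description precedes it below -/
import Mathlib

section
/- Let f_i : ℝ^d → ℝ for i = 1,…,n be differentiable, μ-strongly convex and L-smooth (∇f_i is L-Lipschitz), and let λ_1,…,λ_k > 0 and γ_1,…,γ_n > 0. Let ({θ̂'_i}, {ŵ_j}, ŵ̄) be the unique minimizer of F_MTL({θ_i},{w_j},w̄) = Σ_{j=1}^k ( Σ_{i∈I_j} ( f_i(θ_i) + (γ_i/2)‖θ_i − w_j‖² ) + (λ_j/2)‖w_j − w̄‖² ). Set α_j = λ_j/(λ_j + Σ_{i∈I_j} γ_i) for each j, and let {θ̂_i} be the unique minimizer of F({θ_i}) = Σ_{j=1}^k Σ_{i∈I_j} ( f_i(θ_i) + ((1−α_j)γ_i/2)‖θ_i − θ̄_j‖² + (α_j γ_i/2)‖θ_i − θ̄‖² ). Then θ̂_i = θ̂'_i for all i = 1,…,n. -/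
open scoped BigOperators

noncomputable section

/-- `E d` is the Euclidean space ℝ^d. -/
abbrev E (d : ℕ) := EuclideanSpace ℝ (Fin d)

/-- The cluster `I_j` of clients assigned to cluster `j` by the assignment map `c`. -/
def clSet {n k : ℕ} (c : Fin n → Fin k) (j : Fin k) : Finset (Fin n) :=
  Finset.univ.filter fun i => c i = j

/-- The weighted cluster average θ̄_j = (Σ_{i∈I_j} γ_i θ_i)/(Σ_{i∈I_j} γ_i). -/
def clAvg {n k d : ℕ} (c : Fin n → Fin k) (γ : Fin n → ℝ) (j : Fin k)
    (θ : Fin n → E d) : E d :=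
  (∑ i ∈ clSet c j, γ i)⁻¹ • ∑ i ∈ clSet c j, γ i • θ i

/-- The global average θ̄ = (Σ_j Σ_{i∈I_j} α_j γ_i θ_i)/(Σ_j Σ_{i∈I_j} α_j γ_i). -/
def glAvg {n k d : ℕ} (c : Fin n → Fin k) (γ : Fin n → ℝ) (α : Fin k → ℝ)
    (θ : Fin n → E d) : E d :=
  (∑ j, ∑ i ∈ clSet c j, α j * γ i)⁻¹ • ∑ j, ∑ i ∈ clSet c j, (α j * γ i) • θ i

/-
Completing the square in the centres: writing `S_j = ∑_{i ∈ I_j} γ_i`, for fixed `θ`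
  `F_MTL(θ, w, w̄) = F(θ) + ∑_j (S_j + λ_j)/2 ‖w_j - w_j*‖² + (∑_j α_j S_j)/2 ‖w̄ - θ̄‖²`,
where `w_j*` is the `(S_j, λ_j)`-weighted mean of `θ̄_j` and `w̄`. This follows from the
parallel-axis identity `∑ wᵢ ‖xᵢ - b‖² = ∑ wᵢ ‖xᵢ - x̄‖² + (∑ wᵢ) ‖x̄ - b‖²`, used inside each
cluster, in its two-point form for `w_j`, and across clusters with the weights
`α_j S_j = S_j λ_j / (S_j + λ_j)`, whose centre of mass is `θ̄`. So `F` is the minimum of `F_MTL`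
over the centres, and `θ̂` together with its optimal centres minimises `F_MTL`. Strong convexity
of the `f_i` makes `F_MTL` strictly midpoint convex in `θ`, so two minimisers of `F_MTL` have the
same `θ`.
-/

open Finset

section InnerProductSpace

variable {ι V : Type*} [NormedAddCommGroup V] [InnerProductSpace ℝ V]

theorem Finset.sum_mul_norm_sub_sq_eq_add (s : Finset ι) (w : ι → ℝ) (x : ι → V) (b : V)
    (hw : ∑ i ∈ s, w i ≠ 0) :
    ∑ i ∈ s, w i * ‖x i - b‖ ^ 2 =
      ∑ i ∈ s, w i * ‖x i - s.centerMass w x‖ ^ 2 + (∑ i ∈ s, w i) * ‖s.centerMass w x - b‖ ^ 2 := by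
  set m := s.centerMass w x with hm_def
  have hm : ∑ i ∈ s, w i • (x i - m) = 0 := by
    simp only [smul_sub, sum_sub_distrib, ← sum_smul]
    rw [hm_def, centerMass, smul_smul, mul_inv_cancel₀ hw, one_smul, sub_self]
  have hcross : ∑ i ∈ s, w i * inner ℝ (x i - m) (m - b) = 0 := by
    simp_rw [← real_inner_smul_left, ← sum_inner, hm, inner_zero_left]
  calc ∑ i ∈ s, w i * ‖x i - b‖ ^ 2
      = ∑ i ∈ s, (w i * ‖x i - m‖ ^ 2 + 2 * (w i * inner ℝ (x i - m) (m - b))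
          + w i * ‖m - b‖ ^ 2) := by
        refine sum_congr rfl fun i _ => ?_
        rw [← sub_add_sub_cancel (x i) m b, norm_add_sq_real]
        ring
    _ = _ := by rw [sum_add_distrib, sum_add_distrib, ← mul_sum, hcross, ← sum_mul]; ring

theorem mul_norm_sub_sq_add_mul_norm_sub_sq (a b w : V) {S l : ℝ} (h : S + l ≠ 0) :
    S * ‖a - w‖ ^ 2 + l * ‖w - b‖ ^ 2 =
      (S + l) * ‖w - (S + l)⁻¹ • (S • a + l • b)‖ ^ 2 + S * l / (S + l) * ‖a - b‖ ^ 2 := by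
  simp only [norm_sub_sq_real, norm_smul, inner_smul_right, inner_add_right, norm_add_sq_real,
    mul_pow, real_inner_smul_left, Real.norm_eq_abs, sq_abs]
  rw [real_inner_comm w a]
  field_simp
  ring

theorem StrongConvexOn.apply_midpoint_le {s : Set V} {m : ℝ} {φ : V → ℝ}
    (hφ : StrongConvexOn s m φ) {x y : V} (hx : x ∈ s) (hy : y ∈ s) :
    φ ((2 : ℝ)⁻¹ • (x + y)) ≤ (φ x + φ y) / 2 - m / 8 * ‖x - y‖ ^ 2 := by
  have h := hφ.2 hx hy (by norm_num : (0 : ℝ) ≤ 2⁻¹) (by norm_num : (0 : ℝ) ≤ 2⁻¹) (by norm_num)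
  rw [← smul_add, smul_eq_mul, smul_eq_mul] at h
  linarith

theorem norm_midpoint_sub_midpoint_sq_le (x y u v : V) :
    ‖(2 : ℝ)⁻¹ • (x + y) - (2 : ℝ)⁻¹ • (u + v)‖ ^ 2 ≤ (‖x - u‖ ^ 2 + ‖y - v‖ ^ 2) / 2 := by
  rw [← smul_sub, add_sub_add_comm, norm_smul, mul_pow, norm_add_sq_real]
  have := norm_sub_sq_real (x - u) (y - v)
  have := sq_nonneg ‖x - u - (y - v)‖
  norm_num
  linarith

end InnerProductSpace

section MultiTask

variable {n k d : ℕ} (c : Fin n → Fin k) (f : Fin n → E d → ℝ) (γ : Fin n → ℝ)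

def mtlObjective (lam : Fin k → ℝ) (p : (Fin n → E d) × (Fin k → E d) × E d) : ℝ :=
  ∑ j, ((∑ i ∈ clSet c j, (f i (p.1 i) + γ i / 2 * ‖p.1 i - p.2.1 j‖ ^ 2))
    + lam j / 2 * ‖p.2.1 j - p.2.2‖ ^ 2)

def regObjective (α : Fin k → ℝ) (θ : Fin n → E d) : ℝ :=
  ∑ j, ∑ i ∈ clSet c j,
    (f i (θ i) + (1 - α j) * γ i / 2 * ‖θ i - clAvg c γ j θ‖ ^ 2
      + α j * γ i / 2 * ‖θ i - glAvg c γ α θ‖ ^ 2)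

def optimalCenter (lam : Fin k → ℝ) (θ : Fin n → E d) (wb : E d) (j : Fin k) : E d :=
  (∑ i ∈ clSet c j, γ i + lam j)⁻¹ • ((∑ i ∈ clSet c j, γ i) • clAvg c γ j θ + lam j • wb)

variable {c f γ} {lam α : Fin k → ℝ}

theorem clAvg_eq_centerMass (j : Fin k) (θ : Fin n → E d) :
    clAvg c γ j θ = (clSet c j).centerMass γ θ := rfl

theorem glAvg_eq_centerMass (hS : ∀ j, ∑ i ∈ clSet c j, γ i ≠ 0) (θ : Fin n → E d) :
    glAvg c γ α θ =
      univ.centerMass (fun j => α j * ∑ i ∈ clSet c j, γ i) (fun j => clAvg c γ j θ) := by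
  simp only [glAvg, centerMass, clAvg, ← mul_sum]
  congr 1
  refine sum_congr rfl fun j _ => ?_
  rw [smul_smul, mul_assoc, mul_inv_cancel₀ (hS j), mul_one, smul_sum]
  simp only [mul_smul]

theorem mul_sum_clSet_pos {j : Fin k} (hS : 0 < ∑ i ∈ clSet c j, γ i) (hlam : 0 < lam j)
    (hα : α j = lam j / (lam j + ∑ i ∈ clSet c j, γ i)) :
    0 < α j * ∑ i ∈ clSet c j, γ i := by
  rw [hα]; positivity

theorem mtl_cluster_eq_reg_cluster_add {j : Fin k} (hS : 0 < ∑ i ∈ clSet c j, γ i)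
    (hlam : 0 < lam j) (hα : α j = lam j / (lam j + ∑ i ∈ clSet c j, γ i))
    (θ : Fin n → E d) (w wb g : E d) :
    ∑ i ∈ clSet c j, (f i (θ i) + γ i / 2 * ‖θ i - w‖ ^ 2) + lam j / 2 * ‖w - wb‖ ^ 2
        + α j * (∑ i ∈ clSet c j, γ i) * ‖clAvg c γ j θ - g‖ ^ 2 / 2 =
      ∑ i ∈ clSet c j, (f i (θ i) + (1 - α j) * γ i / 2 * ‖θ i - clAvg c γ j θ‖ ^ 2
          + α j * γ i / 2 * ‖θ i - g‖ ^ 2)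
        + (∑ i ∈ clSet c j, γ i + lam j) / 2 * ‖w - optimalCenter c γ lam θ wb j‖ ^ 2
        + α j * (∑ i ∈ clSet c j, γ i) * ‖clAvg c γ j θ - wb‖ ^ 2 / 2 := by
  have hw := (clSet c j).sum_mul_norm_sub_sq_eq_add γ θ w hS.ne'
  have hg := (clSet c j).sum_mul_norm_sub_sq_eq_add γ θ g hS.ne'
  rw [← clAvg_eq_centerMass] at hw hg
  have hcenter := mul_norm_sub_sq_add_mul_norm_sub_sq (clAvg c γ j θ) wb w
    (add_pos hS hlam).ne'
  have hαS : α j * ∑ i ∈ clSet c j, γ i =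
      (∑ i ∈ clSet c j, γ i) * lam j / (∑ i ∈ clSet c j, γ i + lam j) := by
    rw [hα, add_comm]; ring
  have hL : ∑ i ∈ clSet c j, (f i (θ i) + γ i / 2 * ‖θ i - w‖ ^ 2) =
      ∑ i ∈ clSet c j, f i (θ i) + 1 / 2 * ∑ i ∈ clSet c j, γ i * ‖θ i - w‖ ^ 2 := by
    rw [mul_sum, ← sum_add_distrib]
    exact sum_congr rfl fun i _ => by ring
  have hR : ∑ i ∈ clSet c j, (f i (θ i) + (1 - α j) * γ i / 2 * ‖θ i - clAvg c γ j θ‖ ^ 2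
          + α j * γ i / 2 * ‖θ i - g‖ ^ 2) =
      ∑ i ∈ clSet c j, f i (θ i) + (1 - α j) / 2 * ∑ i ∈ clSet c j, γ i * ‖θ i - clAvg c γ j θ‖ ^ 2
        + α j / 2 * ∑ i ∈ clSet c j, γ i * ‖θ i - g‖ ^ 2 := by
    rw [mul_sum, mul_sum, ← sum_add_distrib, ← sum_add_distrib]
    exact sum_congr rfl fun i _ => by ring
  rw [hL, hR, hw, hg, optimalCenter]
  linear_combination (1 / 2) * hcenter - (‖clAvg c γ j θ - wb‖ ^ 2 / 2) * hαS

theorem mtlObjective_eq (hS : ∀ j, 0 < ∑ i ∈ clSet c j, γ i) (hlam : ∀ j, 0 < lam j)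
    (hα : ∀ j, α j = lam j / (lam j + ∑ i ∈ clSet c j, γ i))
    (θ : Fin n → E d) (w : Fin k → E d) (wb : E d) :
    mtlObjective c f γ lam (θ, w, wb) =
      regObjective c f γ α θ
        + ∑ j, (∑ i ∈ clSet c j, γ i + lam j) / 2 * ‖w j - optimalCenter c γ lam θ wb j‖ ^ 2
        + (∑ j, α j * ∑ i ∈ clSet c j, γ i) / 2 * ‖wb - glAvg c γ α θ‖ ^ 2 := by
  rcases isEmpty_or_nonempty (Fin k) with hk | hk
  · simp [mtlObjective, regObjective, univ_eq_empty]
  have hclusters := sum_congr rfl fun j (_ : j ∈ univ) =>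
    mtl_cluster_eq_reg_cluster_add (f := f) (hS j) (hlam j) (hα j) θ (w j) wb (glAvg c γ α θ)
  have hacross := univ.sum_mul_norm_sub_sq_eq_add (fun j => α j * ∑ i ∈ clSet c j, γ i)
    (fun j => clAvg c γ j θ) wb
    (sum_pos (fun j _ => mul_sum_clSet_pos (hS j) (hlam j) (hα j)) univ_nonempty).ne'
  rw [← glAvg_eq_centerMass fun j => (hS j).ne'] at hacross
  simp only [sum_add_distrib, ← sum_div] at hclusters
  simp only [mtlObjective, regObjective, sum_add_distrib, norm_sub_rev wb]
  linear_combination hclusters + hacross / 2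

theorem regObjective_le_mtlObjective (hS : ∀ j, 0 < ∑ i ∈ clSet c j, γ i)
    (hlam : ∀ j, 0 < lam j) (hα : ∀ j, α j = lam j / (lam j + ∑ i ∈ clSet c j, γ i))
    (p : (Fin n → E d) × (Fin k → E d) × E d) :
    regObjective c f γ α p.1 ≤ mtlObjective c f γ lam p := by
  rw [mtlObjective_eq hS hlam hα]
  have hcenters : 0 ≤ ∑ j, (∑ i ∈ clSet c j, γ i + lam j) / 2
      * ‖p.2.1 j - optimalCenter c γ lam p.1 p.2.2 j‖ ^ 2 :=
    sum_nonneg fun j _ => by have := hS j; have := hlam j; positivity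
  have hweights : 0 ≤ ∑ j, α j * ∑ i ∈ clSet c j, γ i :=
    sum_nonneg fun j _ => (mul_sum_clSet_pos (hS j) (hlam j) (hα j)).le
  have : 0 ≤ (∑ j, α j * ∑ i ∈ clSet c j, γ i) / 2 * ‖p.2.2 - glAvg c γ α p.1‖ ^ 2 := by
    positivity
  linarith

theorem mtlObjective_optimalCenter (hS : ∀ j, 0 < ∑ i ∈ clSet c j, γ i)
    (hlam : ∀ j, 0 < lam j) (hα : ∀ j, α j = lam j / (lam j + ∑ i ∈ clSet c j, γ i))
    (θ : Fin n → E d) :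
    mtlObjective c f γ lam (θ, optimalCenter c γ lam θ (glAvg c γ α θ), glAvg c γ α θ) =
      regObjective c f γ α θ := by
  simp [mtlObjective_eq hS hlam hα]

theorem mtlObjective_optimalCenter_le_of_forall_le (hS : ∀ j, 0 < ∑ i ∈ clSet c j, γ i)
    (hlam : ∀ j, 0 < lam j) (hα : ∀ j, α j = lam j / (lam j + ∑ i ∈ clSet c j, γ i))
    {θ : Fin n → E d} (hθ : ∀ θ', regObjective c f γ α θ ≤ regObjective c f γ α θ')
    (p : (Fin n → E d) × (Fin k → E d) × E d) :
    mtlObjective c f γ lam (θ, optimalCenter c γ lam θ (glAvg c γ α θ), glAvg c γ α θ) ≤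
      mtlObjective c f γ lam p :=
  calc _ = regObjective c f γ α θ := mtlObjective_optimalCenter hS hlam hα θ
    _ ≤ regObjective c f γ α p.1 := hθ p.1
    _ ≤ mtlObjective c f γ lam p := regObjective_le_mtlObjective hS hlam hα p

theorem mtlObjective_midpoint_le {μ : ℝ} (hf : ∀ i, StrongConvexOn Set.univ μ (f i))
    (hγ : ∀ i, 0 ≤ γ i) (hlam : ∀ j, 0 ≤ lam j) (p q : (Fin n → E d) × (Fin k → E d) × E d) :
    mtlObjective c f γ lam ((2 : ℝ)⁻¹ • (p + q)) ≤
      (mtlObjective c f γ lam p + mtlObjective c f γ lam q) / 2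
        - μ / 8 * ∑ i, ‖p.1 i - q.1 i‖ ^ 2 := by
  have hclient : ∀ j, ∀ i ∈ clSet c j,
      f i ((2 : ℝ)⁻¹ • (p.1 i + q.1 i))
          + γ i / 2 * ‖(2 : ℝ)⁻¹ • (p.1 i + q.1 i) - (2 : ℝ)⁻¹ • (p.2.1 j + q.2.1 j)‖ ^ 2 ≤
        ((f i (p.1 i) + γ i / 2 * ‖p.1 i - p.2.1 j‖ ^ 2)
          + (f i (q.1 i) + γ i / 2 * ‖q.1 i - q.2.1 j‖ ^ 2)) / 2
          - μ / 8 * ‖p.1 i - q.1 i‖ ^ 2 := fun j i _ => by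
    have := (hf i).apply_midpoint_le (Set.mem_univ (p.1 i)) (Set.mem_univ (q.1 i))
    have := mul_le_mul_of_nonneg_left
      (norm_midpoint_sub_midpoint_sq_le (p.1 i) (q.1 i) (p.2.1 j) (q.2.1 j)) (hγ i)
    linarith
  have hcenter : ∀ j,
      lam j / 2 * ‖(2 : ℝ)⁻¹ • (p.2.1 j + q.2.1 j) - (2 : ℝ)⁻¹ • (p.2.2 + q.2.2)‖ ^ 2 ≤
        (lam j / 2 * ‖p.2.1 j - p.2.2‖ ^ 2 + lam j / 2 * ‖q.2.1 j - q.2.2‖ ^ 2) / 2 := fun j => by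
    have := mul_le_mul_of_nonneg_left
      (norm_midpoint_sub_midpoint_sq_le (p.2.1 j) (q.2.1 j) p.2.2 q.2.2) (hlam j)
    linarith
  have hsum := sum_le_sum fun j (_ : j ∈ univ) => add_le_add (sum_le_sum (hclient j)) (hcenter j)
  simp only [sum_add_distrib, sum_sub_distrib, ← sum_div, ← mul_sum] at hsum
  rw [← sum_fiberwise univ c]
  simp only [mtlObjective, Prod.smul_fst, Prod.smul_snd, Prod.fst_add, Prod.snd_add, Pi.add_apply,
    Pi.smul_apply, sum_add_distrib]
  exact hsum.trans_eq (by simp only [clSet]; ring)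

theorem fst_eq_of_forall_mtlObjective_le {μ : ℝ} (hμ : 0 < μ)
    (hf : ∀ i, StrongConvexOn Set.univ μ (f i)) (hγ : ∀ i, 0 ≤ γ i) (hlam : ∀ j, 0 ≤ lam j)
    {p q : (Fin n → E d) × (Fin k → E d) × E d}
    (hp : ∀ r, mtlObjective c f γ lam p ≤ mtlObjective c f γ lam r)
    (hq : ∀ r, mtlObjective c f γ lam q ≤ mtlObjective c f γ lam r) :
    p.1 = q.1 := by
  have hdist : ∑ i, ‖p.1 i - q.1 i‖ ^ 2 ≤ 0 := by
    have := mtlObjective_midpoint_le (c := c) hf hγ hlam p q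
    have := hp ((2 : ℝ)⁻¹ • (p + q))
    have := hp q
    have := hq p
    nlinarith
  funext i
  have := (sum_eq_zero_iff_of_nonneg fun i _ => sq_nonneg ‖p.1 i - q.1 i‖).1
    (hdist.antisymm (by positivity)) i (mem_univ i)
  rwa [sq_eq_zero_iff, norm_eq_zero, sub_eq_zero] at this

end MultiTask

theorem minimizers_coincide_general {n k d : ℕ}
    (c : Fin n → Fin k) (hc : ∀ j, (clSet c j).Nonempty)
    (f : Fin n → E d → ℝ) (μ : ℝ) (hμ : 0 < μ)
    (hsc : ∀ i, ConvexOn ℝ Set.univ (fun x => f i x - μ / 2 * ‖x‖ ^ 2))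
    (lam : Fin k → ℝ) (hlam : ∀ j, 0 < lam j)
    (γ : Fin n → ℝ) (hγ : ∀ i, 0 < γ i)
    (FMTL : ((Fin n → E d) × (Fin k → E d) × E d) → ℝ)
    (hFMTL : ∀ p, FMTL p = ∑ j, ((∑ i ∈ clSet c j,
        (f i (p.1 i) + γ i / 2 * ‖p.1 i - p.2.1 j‖ ^ 2))
          + lam j / 2 * ‖p.2.1 j - p.2.2‖ ^ 2))
    (α : Fin k → ℝ) (hα : ∀ j, α j = lam j / (lam j + ∑ i ∈ clSet c j, γ i))
    (F : (Fin n → E d) → ℝ)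
    (hF : ∀ θ, F θ = ∑ j, ∑ i ∈ clSet c j,
        (f i (θ i) + (1 - α j) * γ i / 2 * ‖θ i - clAvg c γ j θ‖ ^ 2
          + α j * γ i / 2 * ‖θ i - glAvg c γ α θ‖ ^ 2))
    (p' : (Fin n → E d) × (Fin k → E d) × E d)
    (hp' : ∀ q, FMTL p' ≤ FMTL q)
    (θhat : Fin n → E d)
    (hθhat : ∀ q, F θhat ≤ F q) :
    ∀ i, θhat i = p'.1 i := by
  obtain rfl : FMTL = mtlObjective c f γ lam := funext hFMTL
  obtain rfl : F = regObjective c f γ α := funext hF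
  have hS j : 0 < ∑ i ∈ clSet c j, γ i := sum_pos (fun i _ => hγ i) (hc j)
  have hlift := mtlObjective_optimalCenter_le_of_forall_le hS hlam hα hθhat
  exact congrFun (fst_eq_of_forall_mtlObjective_le hμ
    (fun i => strongConvexOn_iff_convex.2 (hsc i)) (fun i => (hγ i).le) (fun j => (hlam j).le)
    hlift hp')

/-- the minimizer of the multi-task objective F_MTL and the minimizer of
the regularized objective F coincide (in the θ components) when
α_j = λ_j/(λ_j + Σ_{i∈I_j} γ_i). -/
theorem minimizers_coincide {n k d : ℕ}
    (c : Fin n → Fin k) (hc : ∀ j, (clSet c j).Nonempty)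
    (f : Fin n → E d → ℝ) (μ L : ℝ) (hμ : 0 < μ) (hL : 0 < L)
    (hdiff : ∀ i, Differentiable ℝ (f i))
    (hsc : ∀ i, ConvexOn ℝ Set.univ (fun x => f i x - μ / 2 * ‖x‖ ^ 2))
    (hsm : ∀ i, ∀ x y, ‖gradient (f i) x - gradient (f i) y‖ ≤ L * ‖x - y‖)
    (lam : Fin k → ℝ) (hlam : ∀ j, 0 < lam j)
    (γ : Fin n → ℝ) (hγ : ∀ i, 0 < γ i)
    (FMTL : ((Fin n → E d) × (Fin k → E d) × E d) → ℝ)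
    (hFMTL : ∀ p, FMTL p = ∑ j, ((∑ i ∈ clSet c j,
        (f i (p.1 i) + γ i / 2 * ‖p.1 i - p.2.1 j‖ ^ 2))
          + lam j / 2 * ‖p.2.1 j - p.2.2‖ ^ 2))
    (α : Fin k → ℝ) (hα : ∀ j, α j = lam j / (lam j + ∑ i ∈ clSet c j, γ i))
    (F : (Fin n → E d) → ℝ)
    (hF : ∀ θ, F θ = ∑ j, ∑ i ∈ clSet c j,
        (f i (θ i) + (1 - α j) * γ i / 2 * ‖θ i - clAvg c γ j θ‖ ^ 2
          + α j * γ i / 2 * ‖θ i - glAvg c γ α θ‖ ^ 2))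
    (p' : (Fin n → E d) × (Fin k → E d) × E d)
    (hp' : ∀ q, FMTL p' ≤ FMTL q)
    (θhat : Fin n → E d)
    (hθhat : ∀ q, F θhat ≤ F q) :
    ∀ i, θhat i = p'.1 i :=
  minimizers_coincide_general c hc f μ hμ hsc lam hlam γ hγ FMTL hFMTL α hα F hF p' hp' θhat hθhat
end
end

section
/- Let F : ℝ^D → ℝ be differentiable and μ-strongly convex with minimizer x*. Let Ω be a finite set with probability weights q : Ω → [0,1], Σ_ω q(ω) = 1, and let g : ℝ^D × Ω → ℝ^D satisfy: (i) Σ_ω q(ω) g(x,ω) = ∇F(x) for all x (unbiasedness); and (ii) Σ_ω q(ω) ‖g(x,ω) − g(x*,ω)‖² ≤ 2𝓛 (F(x) − F(x*)) for all x (expected smoothness), for some 𝓛 > 0. Let σ² = Σ_ω q(ω) ‖g(x*,ω)‖². Consider the SGD iterates x^{t+1} = x^t − η g(x^t, ω_t), where ω_0, ω_1, … are drawn i.i.d. from q and x^0 is deterministic. If 0 < η ≤ 1/(2𝓛), then for all t ≥ 0, E‖x^t − x*‖² ≤ (1 − ημ)^t ‖x^0 − x*‖² + 2ησ²/μ, where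 the expectation is over the i.i.d. draws ω_0,…,ω_{t−1}. -/
/-!
Strong convexity gives `⟪∇F y, y - x*⟫ ≥ F y - F x* + μ/2 ‖y - x*‖²`, and expected smoothness
bounds the second moment `E‖g(y, ω)‖² ≤ 4𝓛 (F y - F x*) + 2σ²`. Expanding the square, the
`F y - F x*` terms cancel as soon as `η ≤ 1/(2𝓛)`, leaving the drift inequality
`E‖y - η g(y, ω) - x*‖² ≤ (1 - ημ) ‖y - x*‖² + 2η²σ²`. Conditioning on the first `t` draws and
unrolling gives the claim, since `2ησ²/μ` is the fixed point of `c ↦ (1 - ημ) c + 2η²σ²`.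
Unrolling needs `1 - ημ ≥ 0`: unless the space is a point, the Polyak–Łojasiewicz inequality and
Jensen's inequality for the unbiased estimator give `2μ (F - F*) ≤ ‖∇F‖² ≤ 2𝓛 (F - F*)`, so `μ ≤ 𝓛`.
-/

open Finset
open scoped RealInnerProductSpace

section WeightedSum

variable {Ω E : Type*} [Fintype Ω] [NormedAddCommGroup E] {q : Ω → ℝ}

theorem sum_mul_norm_sq_le_two_mul_add (hq0 : ∀ ω, 0 ≤ q ω) (v w : Ω → E) :
    ∑ ω, q ω * ‖v ω‖ ^ 2
      ≤ 2 * ∑ ω, q ω * ‖v ω - w ω‖ ^ 2 + 2 * ∑ ω, q ω * ‖w ω‖ ^ 2 := by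
  rw [mul_sum, mul_sum, ← sum_add_distrib]
  gcongr with ω
  have h : ‖v ω‖ ^ 2 ≤ 2 * (‖v ω - w ω‖ ^ 2 + ‖w ω‖ ^ 2) :=
    calc ‖v ω‖ ^ 2 = ‖(v ω - w ω) + w ω‖ ^ 2 := by rw [sub_add_cancel]
      _ ≤ (‖v ω - w ω‖ + ‖w ω‖) ^ 2 := by gcongr; exact norm_add_le _ _
      _ ≤ 2 * (‖v ω - w ω‖ ^ 2 + ‖w ω‖ ^ 2) := add_sq_le
  nlinarith [mul_le_mul_of_nonneg_left h (hq0 ω)]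

variable [InnerProductSpace ℝ E]

theorem norm_sum_smul_sq_le (hq0 : ∀ ω, 0 ≤ q ω) (hq1 : ∑ ω, q ω = 1) (v : Ω → E) :
    ‖∑ ω, q ω • v ω‖ ^ 2 ≤ ∑ ω, q ω * ‖v ω‖ ^ 2 :=
  (convexOn_univ_norm.pow (fun x _ => norm_nonneg x) 2).map_sum_le (fun ω _ => hq0 ω) hq1
    fun _ _ => Set.mem_univ _

theorem sum_mul_norm_sub_smul_sq (hq1 : ∑ ω, q ω = 1) (z : E) (η : ℝ) (v : Ω → E) :
    ∑ ω, q ω * ‖z - η • v ω‖ ^ 2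
      = ‖z‖ ^ 2 - 2 * η * ⟪∑ ω, q ω • v ω, z⟫ + η ^ 2 * ∑ ω, q ω * ‖v ω‖ ^ 2 := by
  have h : ∀ ω, q ω * ‖z - η • v ω‖ ^ 2
      = q ω * ‖z‖ ^ 2 - 2 * η * ⟪q ω • v ω, z⟫ + η ^ 2 * (q ω * ‖v ω‖ ^ 2) := fun ω => by
    rw [norm_sub_sq_real, real_inner_smul_right, real_inner_smul_left, real_inner_comm, norm_smul,
      mul_pow, Real.norm_eq_abs, sq_abs]
    ring
  simp only [h, sum_add_distrib, sum_sub_distrib, ← sum_mul, ← mul_sum, ← sum_inner, hq1, one_mul]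

end WeightedSum

section StronglyConvex

variable {E : Type*} [NormedAddCommGroup E] [InnerProductSpace ℝ E] [CompleteSpace E]
  {F : E → ℝ} {μ : ℝ} {xstar : E}

theorem gradient_eq_zero_of_forall_le (hmin : ∀ x, F xstar ≤ F x) : gradient F xstar = 0 := by
  rw [gradient, IsLocalMin.fderiv_eq_zero (Filter.Eventually.of_forall hmin), map_zero]

theorem sub_add_half_mul_norm_sq_le_inner_gradient
    (hsc : ∀ x y, F x + ⟪gradient F x, y - x⟫ + μ / 2 * ‖y - x‖ ^ 2 ≤ F y) (x y : E) :
    F y - F x + μ / 2 * ‖y - x‖ ^ 2 ≤ ⟪gradient F y, y - x⟫ := by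
  have h := hsc y x
  rw [← neg_sub y x, inner_neg_right, norm_neg] at h
  linarith

theorem half_mul_norm_sq_le_sub
    (hsc : ∀ x y, F x + ⟪gradient F x, y - x⟫ + μ / 2 * ‖y - x‖ ^ 2 ≤ F y)
    (hmin : ∀ x, F xstar ≤ F x) (y : E) :
    μ / 2 * ‖y - xstar‖ ^ 2 ≤ F y - F xstar := by
  have h := hsc xstar y
  rw [gradient_eq_zero_of_forall_le hmin, inner_zero_left] at h
  linarith

theorem two_mul_sub_le_norm_gradient_sq (hμ : 0 < μ)
    (hsc : ∀ x y, F x + ⟪gradient F x, y - x⟫ + μ / 2 * ‖y - x‖ ^ 2 ≤ F y) (x y : E) :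
    2 * μ * (F y - F x) ≤ ‖gradient F y‖ ^ 2 := by
  have h := sub_add_half_mul_norm_sq_le_inner_gradient hsc x y
  have hcs := real_inner_le_norm (gradient F y) (y - x)
  nlinarith [sq_nonneg (‖gradient F y‖ - μ * ‖y - x‖)]

end StronglyConvex

section ExpectedSmoothness

variable {E Ω : Type*} [NormedAddCommGroup E] [InnerProductSpace ℝ E] [CompleteSpace E]
  [Fintype Ω] {F : E → ℝ} {μ LL : ℝ} {xstar : E} {q : Ω → ℝ} {g : E → Ω → E}

theorem norm_gradient_sq_le_of_expectedSmoothness (hmin : ∀ x, F xstar ≤ F x)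
    (hq0 : ∀ ω, 0 ≤ q ω) (hq1 : ∑ ω, q ω = 1)
    (hunbiased : ∀ x, ∑ ω, q ω • g x ω = gradient F x)
    (hes : ∀ x, ∑ ω, q ω * ‖g x ω - g xstar ω‖ ^ 2 ≤ 2 * LL * (F x - F xstar)) (y : E) :
    ‖gradient F y‖ ^ 2 ≤ 2 * LL * (F y - F xstar) := by
  have hmean : ∑ ω, q ω • (g y ω - g xstar ω) = gradient F y := by
    simp only [smul_sub, sum_sub_distrib, hunbiased, gradient_eq_zero_of_forall_le hmin, sub_zero]
  rw [← hmean]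
  exact (norm_sum_smul_sq_le hq0 hq1 _).trans (hes y)

theorem le_of_expectedSmoothness_of_ne (hμ : 0 < μ)
    (hsc : ∀ x y, F x + ⟪gradient F x, y - x⟫ + μ / 2 * ‖y - x‖ ^ 2 ≤ F y)
    (hmin : ∀ x, F xstar ≤ F x) (hq0 : ∀ ω, 0 ≤ q ω) (hq1 : ∑ ω, q ω = 1)
    (hunbiased : ∀ x, ∑ ω, q ω • g x ω = gradient F x)
    (hes : ∀ x, ∑ ω, q ω * ‖g x ω - g xstar ω‖ ^ 2 ≤ 2 * LL * (F x - F xstar))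
    {y : E} (hy : y ≠ xstar) : μ ≤ LL := by
  have hgap : 0 < F y - F xstar :=
    (mul_pos (half_pos hμ) (pow_pos (norm_pos_iff.2 (sub_ne_zero.2 hy)) 2)).trans_le
      (half_mul_norm_sq_le_sub hsc hmin y)
  have hPL := (two_mul_sub_le_norm_gradient_sq hμ hsc xstar y).trans
    (norm_gradient_sq_le_of_expectedSmoothness hmin hq0 hq1 hunbiased hes y)
  nlinarith

theorem sum_mul_norm_sgd_step_sub_sq_le
    (hsc : ∀ x y, F x + ⟪gradient F x, y - x⟫ + μ / 2 * ‖y - x‖ ^ 2 ≤ F y)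
    (hmin : ∀ x, F xstar ≤ F x) (hq0 : ∀ ω, 0 ≤ q ω) (hq1 : ∑ ω, q ω = 1)
    (hunbiased : ∀ x, ∑ ω, q ω • g x ω = gradient F x)
    (hes : ∀ x, ∑ ω, q ω * ‖g x ω - g xstar ω‖ ^ 2 ≤ 2 * LL * (F x - F xstar))
    {η : ℝ} (hη : 0 ≤ η) (hηLL : η * (2 * LL) ≤ 1) (y : E) :
    ∑ ω, q ω * ‖y - η • g y ω - xstar‖ ^ 2
      ≤ (1 - η * μ) * ‖y - xstar‖ ^ 2 + 2 * η ^ 2 * ∑ ω, q ω * ‖g xstar ω‖ ^ 2 := by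
  have hshift : ∀ ω, y - η • g y ω - xstar = (y - xstar) - η • g y ω := fun ω => sub_right_comm ..
  simp only [hshift]
  rw [sum_mul_norm_sub_smul_sq hq1, hunbiased]
  have hgap : 0 ≤ F y - F xstar := sub_nonneg.2 (hmin y)
  have hdescent := sub_add_half_mul_norm_sq_le_inner_gradient hsc xstar y
  have hmoment : ∑ ω, q ω * ‖g y ω‖ ^ 2
      ≤ 2 * (2 * LL * (F y - F xstar)) + 2 * ∑ ω, q ω * ‖g xstar ω‖ ^ 2 :=
    (sum_mul_norm_sq_le_two_mul_add hq0 (g y) (g xstar)).trans (by gcongr; exact hes y)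
  nlinarith [mul_le_mul_of_nonneg_left hdescent hη, mul_le_mul_of_nonneg_left hmoment (sq_nonneg η),
    mul_nonneg (sub_nonneg.2 hηLL) (mul_nonneg hη hgap)]

end ExpectedSmoothness

section FinitePaths

variable {Ω : Type*} [Fintype Ω] {q : Ω → ℝ}

theorem sum_prod_mul_eq_sum_snoc {t : ℕ} (f : (Fin (t + 1) → Ω) → ℝ) :
    ∑ p : Fin (t + 1) → Ω, (∏ s, q (p s)) * f p
      = ∑ p : Fin t → Ω, (∏ s, q (p s)) * ∑ ω, q ω * f (Fin.snoc p ω) := by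
  rw [← (Fin.snocEquiv fun _ => Ω).sum_comp, Fintype.sum_prod_type, sum_comm]
  simp only [Fin.snocEquiv_apply, Fin.prod_univ_castSucc, Fin.snoc_castSucc, Fin.snoc_last,
    mul_sum, mul_assoc]
  rfl

theorem sum_prod_eq_one (hq1 : ∑ ω, q ω = 1) (t : ℕ) : ∑ p : Fin t → Ω, ∏ s, q (p s) = 1 := by
  classical
  rw [← Fintype.prod_sum (fun (_ : Fin t) ω => q ω), hq1, prod_const_one]

end FinitePaths

section Iterates

variable {Ω E : Type*} {T : E → Ω → E} {x : (ℕ → Ω) → ℕ → E} {x0 : E}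

theorem apply_eq_of_eqOn_prefix (hx0 : ∀ ω, x ω 0 = x0)
    (hxstep : ∀ ω t, x ω (t + 1) = T (x ω t) (ω t)) {ω ω' : ℕ → Ω} :
    ∀ {t}, (∀ s < t, ω s = ω' s) → x ω t = x ω' t
  | 0, _ => by rw [hx0, hx0]
  | t + 1, h => by
    rw [hxstep, hxstep, apply_eq_of_eqOn_prefix hx0 hxstep fun s hs => h s (by omega),
      h t t.lt_succ_self]

variable [Nonempty Ω]

noncomputable def padPath {t : ℕ} (p : Fin t → Ω) : ℕ → Ω :=
  fun s => if h : s < t then p ⟨s, h⟩ else Classical.arbitrary Ω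

theorem apply_padPath_snoc (hx0 : ∀ ω, x ω 0 = x0)
    (hxstep : ∀ ω t, x ω (t + 1) = T (x ω t) (ω t)) {t : ℕ} (p : Fin t → Ω) (ω : Ω) :
    x (padPath (Fin.snoc p ω)) (t + 1) = T (x (padPath p) t) ω := by
  rw [hxstep]
  congr 1
  · refine apply_eq_of_eqOn_prefix hx0 hxstep fun s hs => ?_
    simp only [padPath, dif_pos hs, dif_pos (hs.trans t.lt_succ_self)]
    exact Fin.snoc_castSucc (α := fun _ => Ω) ω p ⟨s, hs⟩
  · simp only [padPath, dif_pos t.lt_succ_self]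
    exact Fin.snoc_last (α := fun _ => Ω) ω p

variable [Fintype Ω] {q : Ω → ℝ}

theorem sum_prod_mul_padPath_le_of_drift (hq0 : ∀ ω, 0 ≤ q ω) (hq1 : ∑ ω, q ω = 1)
    (hx0 : ∀ ω, x ω 0 = x0) (hxstep : ∀ ω t, x ω (t + 1) = T (x ω t) (ω t))
    {V : E → ℝ} {a b c : ℝ} (ha : 0 ≤ a) (hc : 0 ≤ c) (hbc : a * c + b ≤ c)
    (hdrift : ∀ y, ∑ ω, q ω * V (T y ω) ≤ a * V y + b) :
    ∀ t, ∑ p : Fin t → Ω, (∏ s, q (p s)) * V (x (padPath p) t) ≤ a ^ t * V x0 + c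
  | 0 => by simp [hx0, hc]
  | t + 1 => by
    have ih := sum_prod_mul_padPath_le_of_drift hq0 hq1 hx0 hxstep ha hc hbc hdrift t
    calc ∑ p : Fin (t + 1) → Ω, (∏ s, q (p s)) * V (x (padPath p) (t + 1))
        = ∑ p : Fin t → Ω, (∏ s, q (p s)) * ∑ ω, q ω * V (T (x (padPath p) t) ω) := by
          simp only [sum_prod_mul_eq_sum_snoc, apply_padPath_snoc hx0 hxstep]
      _ ≤ ∑ p : Fin t → Ω, (∏ s, q (p s)) * (a * V (x (padPath p) t) + b) := by
          gcongr with p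
          · exact prod_nonneg fun s _ => hq0 (p s)
          · exact hdrift _
      _ = a * ∑ p : Fin t → Ω, (∏ s, q (p s)) * V (x (padPath p) t)
            + b * ∑ p : Fin t → Ω, ∏ s, q (p s) := by
          rw [mul_sum, mul_sum, ← sum_add_distrib]
          exact sum_congr rfl fun p _ => by ring
      _ ≤ a * (a ^ t * V x0 + c) + b := by
          rw [sum_prod_eq_one hq1, mul_one]
          gcongr
      _ ≤ a ^ (t + 1) * V x0 + c := by
          rw [pow_succ]
          linarith

end Iterates

theorem sgd_convergence_general {D : ℕ} {Ω : Type} [Fintype Ω] [Nonempty Ω]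
    (F : EuclideanSpace ℝ (Fin D) → ℝ) (μ : ℝ) (hμ : 0 < μ)
    (hsc : ∀ x y, F x + ⟪gradient F x, y - x⟫ + μ / 2 * ‖y - x‖ ^ 2 ≤ F y)
    (xstar : EuclideanSpace ℝ (Fin D)) (hmin : ∀ x, F xstar ≤ F x)
    (q : Ω → ℝ) (hq : ∀ ω, 0 ≤ q ω ∧ q ω ≤ 1) (hq1 : ∑ ω, q ω = 1)
    (g : EuclideanSpace ℝ (Fin D) → Ω → EuclideanSpace ℝ (Fin D))
    (LL : ℝ) (hLL : 0 < LL)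
    (hunbiased : ∀ x, ∑ ω, q ω • g x ω = gradient F x)
    (hes : ∀ x, ∑ ω, q ω * ‖g x ω - g xstar ω‖ ^ 2 ≤ 2 * LL * (F x - F xstar))
    (σ2 : ℝ) (hσ : σ2 = ∑ ω, q ω * ‖g xstar ω‖ ^ 2)
    (η : ℝ) (hη : 0 < η) (hη2 : η ≤ 1 / (2 * LL))
    (x0 : EuclideanSpace ℝ (Fin D))
    (x : (ℕ → Ω) → ℕ → EuclideanSpace ℝ (Fin D))
    (hx0 : ∀ ω, x ω 0 = x0)
    (hxstep : ∀ ω t, x ω (t + 1) = x ω t - η • g (x ω t) (ω t)) :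
    ∀ t : ℕ,
      ∑ path : Fin t → Ω, (∏ s, q (path s)) *
          ‖x (fun s => if h : s < t then path ⟨s, h⟩ else Classical.arbitrary Ω) t
            - xstar‖ ^ 2
        ≤ (1 - η * μ) ^ t * ‖x0 - xstar‖ ^ 2 + 2 * η * σ2 / μ := by
  have hq0 : ∀ ω, 0 ≤ q ω := fun ω => (hq ω).1
  have hσ0 : 0 ≤ σ2 := hσ ▸ sum_nonneg fun ω _ => mul_nonneg (hq0 ω) (sq_nonneg _)
  have hc : 0 ≤ 2 * η * σ2 / μ := by positivity
  by_cases htriv : ∀ y, y = xstar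
  · intro t
    simpa [sub_eq_zero.2 (htriv _)] using hc
  obtain ⟨y, hy⟩ := not_forall.1 htriv
  have hμLL := le_of_expectedSmoothness_of_ne hμ hsc hmin hq0 hq1 hunbiased hes hy
  have hηLL : η * (2 * LL) ≤ 1 := (le_div_iff₀ (by positivity)).1 hη2
  have hcontr : 0 ≤ 1 - η * μ := by nlinarith
  subst hσ
  exact sum_prod_mul_padPath_le_of_drift (T := fun y ω => y - η • g y ω)
    (V := fun y => ‖y - xstar‖ ^ 2) hq0 hq1 hx0 hxstep hcontr hc (le_of_eq (by field_simp; ring))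
    (sum_mul_norm_sgd_step_sub_sq_le hsc hmin hq0 hq1 hunbiased hes hη.le hηLL)

/-- convergence of SGD under unbiasedness and expected smoothness.
For the iterates x^{t+1} = x^t − η g(x^t, ω_t) with i.i.d. draws ω_t from the finite
probability distribution q, if 0 < η ≤ 1/(2𝓛) then
E‖x^t − x*‖² ≤ (1 − ημ)^t ‖x^0 − x*‖² + 2ησ²/μ, the expectation being the finite
weighted sum over all length-t paths of draws. -/
theorem sgd_convergence {D : ℕ} {Ω : Type} [Fintype Ω] [Nonempty Ω]
    (F : EuclideanSpace ℝ (Fin D) → ℝ) (μ : ℝ) (hμ : 0 < μ)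
    (hdiff : Differentiable ℝ F)
    (hsc : ∀ x y, F x + ⟪gradient F x, y - x⟫ + μ / 2 * ‖y - x‖ ^ 2 ≤ F y)
    (xstar : EuclideanSpace ℝ (Fin D)) (hmin : ∀ x, F xstar ≤ F x)
    (q : Ω → ℝ) (hq : ∀ ω, 0 ≤ q ω ∧ q ω ≤ 1) (hq1 : ∑ ω, q ω = 1)
    (g : EuclideanSpace ℝ (Fin D) → Ω → EuclideanSpace ℝ (Fin D))
    (LL : ℝ) (hLL : 0 < LL)
    (hunbiased : ∀ x, ∑ ω, q ω • g x ω = gradient F x)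
    (hes : ∀ x, ∑ ω, q ω * ‖g x ω - g xstar ω‖ ^ 2 ≤ 2 * LL * (F x - F xstar))
    (σ2 : ℝ) (hσ : σ2 = ∑ ω, q ω * ‖g xstar ω‖ ^ 2)
    (η : ℝ) (hη : 0 < η) (hη2 : η ≤ 1 / (2 * LL))
    (x0 : EuclideanSpace ℝ (Fin D))
    (x : (ℕ → Ω) → ℕ → EuclideanSpace ℝ (Fin D))
    (hx0 : ∀ ω, x ω 0 = x0)
    (hxstep : ∀ ω t, x ω (t + 1) = x ω t - η • g (x ω t) (ω t)) :
    ∀ t : ℕ,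
      ∑ path : Fin t → Ω, (∏ s, q (path s)) *
          ‖x (fun s => if h : s < t then path ⟨s, h⟩ else Classical.arbitrary Ω) t
            - xstar‖ ^ 2
        ≤ (1 - η * μ) ^ t * ‖x0 - xstar‖ ^ 2 + 2 * η * σ2 / μ :=
  sgd_convergence_general F μ hμ hsc xstar hmin q hq hq1 g LL hLL hunbiased hes σ2 hσ η hη hη2 x0 x
    hx0 hxstep
end
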